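/- arXiv:2406.15584 — 5 statements merged into one kernel-verified Lean document; each statement's English description precedes it below -/
import Mathlib

section
/- The set of cardinalities of fibers of morphisms in a structure category forms a structure monoid: if Δ is a wide subcategory of FinOrd closed under coproducts of morphisms and under components of similarity natural transformations, and I is the set of all cardinalities |f⁻¹{i}| for f : [m] → [n] in Δ and i ∈ [n], then 1 ∈ I and I is closed under I-indexed sums. -/
/-- The element of `Fin (∑ i, k i)` determined by block `p.1` and offset `p.2`. -/
def sigmaToFin {n : ℕ} {k : Fin n → ℕ} (p : (i : Fin n) × Fin (k i)) : Fin (∑ i, k i) :=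
  ⟨(∑ j ∈ Finset.univ.filter fun j => j < p.1, k j) + p.2.val, by
    have hsub := Finset.sum_le_sum_of_subset (f := k)
      (Finset.subset_univ (insert p.1 (Finset.univ.filter fun j => j < p.1)))
    rw [Finset.sum_insert (by simp)] at hsub
    have := p.2.isLt
    omega⟩

/-- Decomposition of an element of `Fin (∑ i, k i)` into a block index and an offset. -/
def finToSigma {n : ℕ} {k : Fin n → ℕ} (p : Fin (∑ i, k i)) : (i : Fin n) × Fin (k i) :=
  (List.ofFn fun i => List.ofFn fun x : Fin (k i) =>
    (⟨i, x⟩ : (i : Fin n) × Fin (k i))).flatten.get (Fin.cast (by simp [Function.comp_def, List.sum_ofFn]) p)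

/-- Coproduct of two functions between finite ordinals, acting blockwise. -/
def coprodMap {m₁ n₁ m₂ n₂ : ℕ} (f : Fin m₁ → Fin n₁) (g : Fin m₂ → Fin n₂) :
    Fin (m₁ + m₂) → Fin (n₁ + n₂) :=
  finSumFinEquiv ∘ Sum.map f g ∘ finSumFinEquiv.symm

/-- The similarity component `θ'_{k₁,…,kₙ}` of `θ : [m] → [n]`. -/
def simComp {m n : ℕ} (θ : Fin m → Fin n) (k : Fin n → ℕ) :
    Fin (∑ i, k (θ i)) → Fin (∑ j, k j) :=
  fun p => sigmaToFin ⟨θ (finToSigma p).1, (finToSigma p).2⟩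

/-- Cardinality of the fiber of `f` over `i`. -/
def fiberCard {m n : ℕ} (f : Fin m → Fin n) (i : Fin n) : ℕ :=
  (Finset.univ.filter fun x => f x = i).card

/-- A structure category: a wide subcategory of `FinOrd` closed under coproducts of
morphisms and under similarity components. -/
structure IsStructCat (Δ : ∀ m n : ℕ, Set (Fin m → Fin n)) : Prop where
  id_mem : ∀ n, id ∈ Δ n n
  comp_mem : ∀ {k m n : ℕ} (f : Fin k → Fin m) (g : Fin m → Fin n),
    f ∈ Δ k m → g ∈ Δ m n → g ∘ f ∈ Δ k n
  coprod_mem : ∀ {m₁ n₁ m₂ n₂ : ℕ} (f : Fin m₁ → Fin n₁) (g : Fin m₂ → Fin n₂),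
    f ∈ Δ m₁ n₁ → g ∈ Δ m₂ n₂ → coprodMap f g ∈ Δ (m₁ + m₂) (n₁ + n₂)
  sim_mem : ∀ {m n : ℕ} (θ : Fin m → Fin n), θ ∈ Δ m n → ∀ k : Fin n → ℕ,
    simComp θ k ∈ Δ (∑ i, k (θ i)) (∑ j, k j)

/-- A structure monoid: a subset of ℕ containing 1 and closed under `I`-indexed sums. -/
def IsStructMonoid (I : Set ℕ) : Prop :=
  1 ∈ I ∧ ∀ k ∈ I, ∀ a : Fin k → ℕ, (∀ i, a i ∈ I) → (∑ i, a i) ∈ I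

/-- `Δ^I` : functions all of whose fibers have cardinality in `I`. -/
def DeltaUp (I : Set ℕ) : ∀ m n : ℕ, Set (Fin m → Fin n) :=
  fun _ _ => {f | ∀ i, fiberCard f i ∈ I}

/-- The unique map `[n] → [1]`. -/
def bang (n : ℕ) : Fin n → Fin 1 := fun _ => 0

/-- `Δ_I` : the smallest structure category containing the maps `[n] → [1]` for `n ∈ I`. -/
def GenDelta (I : Set ℕ) : ∀ m n : ℕ, Set (Fin m → Fin n) := fun m n =>
  {f | ∀ Δ : ∀ m n : ℕ, Set (Fin m → Fin n), IsStructCat Δ →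
    (∀ k ∈ I, bang k ∈ Δ k 1) → f ∈ Δ m n}


/-! The similarity component of `f : [m] → [n]` along the indicator multiplicities of `i`
is a morphism `[|f⁻¹{i}|] → [1]`, and every map `[c] → [1]` has fiber of size `c`.
So the fiber cardinalities are exactly the `c` with a morphism `[c] → [1]` in `Δ`.
Given `[k] → [1]` and `[aᵢ] → [1]` for `i ∈ [k]`, the coproduct of the latter is a
morphism `[∑ aᵢ] → [k]`, and composing gives `[∑ aᵢ] → [1]`. -/

lemma fiberCard_fin_one {m : ℕ} (f : Fin m → Fin 1) : fiberCard f 0 = m := by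
  simp [fiberCard, Subsingleton.elim _ (0 : Fin 1)]

namespace IsStructCat

variable {Δ : ∀ m n : ℕ, Set (Fin m → Fin n)}

lemma nonempty_fiberCard_one (hΔ : IsStructCat Δ) {m n : ℕ} {f : Fin m → Fin n}
    (hf : f ∈ Δ m n) (i : Fin n) : (Δ (fiberCard f i) 1).Nonempty := by
  have hdom : ∑ x, (if f x = i then 1 else 0) = fiberCard f i := by
    rw [fiberCard, Finset.card_filter]
  have hcod : ∑ j : Fin n, (if j = i then 1 else 0) = 1 := by simp
  have hsim : (Δ _ _).Nonempty := ⟨_, hΔ.sim_mem f hf fun j => if j = i then 1 else 0⟩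
  rwa [hdom, hcod] at hsim

lemma mem_fiberCards_iff (hΔ : IsStructCat Δ) {c : ℕ} :
    (∃ (m n : ℕ) (f : Fin m → Fin n) (i : Fin n), f ∈ Δ m n ∧ fiberCard f i = c) ↔
      (Δ c 1).Nonempty := by
  constructor
  · rintro ⟨m, n, f, i, hf, rfl⟩
    exact hΔ.nonempty_fiberCard_one hf i
  · rintro ⟨f, hf⟩
    exact ⟨c, 1, f, 0, hf, fiberCard_fin_one f⟩

lemma nonempty_sum (hΔ : IsStructCat Δ) {k : ℕ} (a : Fin k → ℕ)
    (ha : ∀ i, (Δ (a i) 1).Nonempty) : (Δ (∑ i, a i) k).Nonempty := by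
  induction k with
  | zero => exact ⟨id, hΔ.id_mem 0⟩
  | succ k ih =>
    obtain ⟨f, hf⟩ := ha 0
    obtain ⟨g, hg⟩ := ih (fun i => a i.succ) fun i => ha i.succ
    have hfg : (Δ _ _).Nonempty := ⟨_, hΔ.coprod_mem f g hf hg⟩
    rwa [← Fin.sum_univ_succ, Nat.add_comm 1 k] at hfg

end IsStructCat

/-- The set of fiber cardinalities of the morphisms of a structure category is a
structure monoid. -/
theorem stmt_1 (Δ : ∀ m n : ℕ, Set (Fin m → Fin n)) (hΔ : IsStructCat Δ) :
    IsStructMonoid {c : ℕ | ∃ (m n : ℕ) (f : Fin m → Fin n) (i : Fin n),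
      f ∈ Δ m n ∧ fiberCard f i = c} := by
  have hI : {c : ℕ | ∃ (m n : ℕ) (f : Fin m → Fin n) (i : Fin n),
      f ∈ Δ m n ∧ fiberCard f i = c} = {c | (Δ c 1).Nonempty} :=
    Set.ext fun _ => hΔ.mem_fiberCards_iff
  rw [hI]
  refine ⟨⟨id, hΔ.id_mem 1⟩, fun k ⟨b, hb⟩ a ha => ?_⟩
  obtain ⟨g, hg⟩ := hΔ.nonempty_sum a ha
  exact ⟨b ∘ g, hΔ.comp_mem g b hg hb⟩
end

section
/- For a structure monoid S with 0 ∉ S, the class Ψ_S of functions f : [m] → [n] in Δ^S satisfying min(f⁻¹{i}) ≤ min(f⁻¹{j}) for all i ≤ j ≤ n is closed under composition: if f : [k] → [m] and g : [m] → [n] both satisfy this min-monotonicity condition and both have all fibers of cardinality in S, then g∘f does too. -/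
/-- The least element of the fiber of `f` over `i` (as a natural number). -/
noncomputable def minFiber {m n : ℕ} (f : Fin m → Fin n) (i : Fin n) : ℕ :=
  sInf {x : ℕ | ∃ h : x < m, f ⟨x, h⟩ = i}

section Aux

/-- If the fiber cardinality is nonzero, the fiber set (as naturals) is nonempty. -/
lemma fiberSet_nonempty {m n : ℕ} (f : Fin m → Fin n) (i : Fin n)
    (h : fiberCard f i ≠ 0) : {x : ℕ | ∃ h : x < m, f ⟨x, h⟩ = i}.Nonempty := by
  unfold fiberCard at h
  obtain ⟨x, hx⟩ := Finset.card_pos.mp (Nat.pos_of_ne_zero h)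
  simp only [Finset.mem_filter] at hx
  exact ⟨x.val, x.isLt, by simpa using hx.2⟩

lemma minFiber_mem {m n : ℕ} (f : Fin m → Fin n) (i : Fin n)
    (h : fiberCard f i ≠ 0) :
    ∃ hlt : minFiber f i < m, f ⟨minFiber f i, hlt⟩ = i :=
  csInf_mem (fiberSet_nonempty f i h)

lemma minFiber_le {m n : ℕ} (f : Fin m → Fin n) {i : Fin n} {x : Fin m}
    (h : f x = i) : minFiber f i ≤ x.val :=
  Nat.sInf_le ⟨x.isLt, by simpa using h⟩

lemma fiberCard_comp {k m n : ℕ} (f : Fin k → Fin m) (g : Fin m → Fin n) (i : Fin n) :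
    fiberCard (g ∘ f) i = ∑ j ∈ Finset.univ.filter fun j => g j = i, fiberCard f j := by
  unfold fiberCard
  rw [Finset.card_eq_sum_card_fiberwise (f := f)
    (t := Finset.univ.filter fun j => g j = i) (fun x hx => by
      simp only [Finset.mem_coe, Finset.mem_filter, Function.comp] at hx ⊢
      exact ⟨Finset.mem_univ _, hx.2⟩)]
  refine Finset.sum_congr rfl fun j hj => ?_
  simp only [Finset.mem_filter] at hj
  congr 1
  ext x
  simp only [Finset.mem_filter, Function.comp, Finset.mem_univ, true_and]
  constructor
  · rintro ⟨_, h⟩; exact h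
  · rintro h; exact ⟨by rw [h, hj.2], h⟩

end Aux

/-- For a structure monoid `S` with `0 ∉ S`, the class `Ψ_S` of min-monotone functions with
all fiber cardinalities in `S` is closed under composition. -/
theorem stmt_4 (S : Set ℕ) (hS : IsStructMonoid S) (h0 : 0 ∉ S)
    {k m n : ℕ} (f : Fin k → Fin m) (g : Fin m → Fin n)
    (hf : ∀ i, fiberCard f i ∈ S) (hg : ∀ i, fiberCard g i ∈ S)
    (hfm : ∀ i j : Fin m, i ≤ j → minFiber f i ≤ minFiber f j)
    (hgm : ∀ i j : Fin n, i ≤ j → minFiber g i ≤ minFiber g j) :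
    (∀ i, fiberCard (g ∘ f) i ∈ S) ∧
      (∀ i j : Fin n, i ≤ j → minFiber (g ∘ f) i ≤ minFiber (g ∘ f) j) := by
  have hcard : ∀ i, fiberCard (g ∘ f) i ∈ S := by
    intro i
    rw [fiberCard_comp]
    set t := Finset.univ.filter fun j => g j = i with ht
    have htc : t.card = fiberCard g i := rfl
    have hmem : fiberCard g i ∈ S := hg i
    have := hS.2 _ hmem (fun p => fiberCard f ((t.equivFin.symm (Fin.cast htc.symm p)) : Fin m))
      (fun p => hf _)
    convert this using 1
    calc ∑ j ∈ t, fiberCard f j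
        = ∑ x : t, fiberCard f x.val := (Finset.sum_coe_sort t _).symm
      _ = ∑ p : Fin t.card, fiberCard f (t.equivFin.symm p).val :=
          (Equiv.sum_comp t.equivFin.symm _).symm
      _ = ∑ p : Fin (fiberCard g i), fiberCard f (t.equivFin.symm (Fin.cast htc.symm p)).val :=
          (Equiv.sum_comp (finCongr htc.symm) _).symm
  refine ⟨hcard, ?_⟩
  -- key: minFiber (g∘f) i = minFiber f (argmin of g over i)
  have key : ∀ i : Fin n, ∃ jg : Fin m, jg.val = minFiber g i ∧ g jg = i ∧
      minFiber (g ∘ f) i = minFiber f jg := by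
    intro i
    have hgne : fiberCard g i ≠ 0 := fun h => h0 (h ▸ hg i)
    obtain ⟨hlt, hgj⟩ := minFiber_mem g i hgne
    refine ⟨⟨minFiber g i, hlt⟩, rfl, hgj, le_antisymm ?_ ?_⟩
    · have hfne : fiberCard f ⟨minFiber g i, hlt⟩ ≠ 0 :=
        fun h => h0 (h ▸ hf _)
      obtain ⟨hlt2, hfx⟩ := minFiber_mem f _ hfne
      exact minFiber_le (g ∘ f) (x := ⟨_, hlt2⟩) (by simp [Function.comp, hfx, hgj])
    · have hne : fiberCard (g ∘ f) i ≠ 0 := fun h => h0 (h ▸ hcard i)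
      obtain ⟨hlt2, hy⟩ := minFiber_mem (g ∘ f) i hne
      set y : Fin k := ⟨minFiber (g ∘ f) i, hlt2⟩ with hyd
      have h1 : minFiber g i ≤ (f y).val := minFiber_le g hy
      have h2 : minFiber f ⟨minFiber g i, hlt⟩ ≤ minFiber f (f y) :=
        hfm _ _ h1
      calc minFiber f ⟨minFiber g i, hlt⟩ ≤ minFiber f (f y) := h2
        _ ≤ y.val := minFiber_le f rfl
  intro i j hij
  obtain ⟨ji, hji, _, hei⟩ := key i
  obtain ⟨jj, hjj, _, hej⟩ := key j
  rw [hei, hej]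
  exact hfm ji jj (by rw [Fin.le_def, hji, hjj]; exact hgm i j hij)
end

section
/- If a structure category Δ contains a single non-identity bijection, then Δ contains all bijections between finite ordinals. -/
/-! A bijection `f ≠ id` of `[m]` is not strictly monotone, so it has an inversion `a < b`,
`f b < f a`. Its similarity component for the weights `1` on `{f a, f b}` and `0` elsewhere is a
self-map of `[2]` that still reverses the blocks of `a` and `b`, i.e. the transposition of `[2]`.
Coproducts with identities turn this into every adjacent transposition of `[n + 1]`, and these
generate the symmetric group. -/

open Finset

section BlockDecomposition

variable {n : ℕ} {k : Fin n → ℕ}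

lemma sigmaToFin_lt_sigmaToFin_of_fst_lt {p q : (i : Fin n) × Fin (k i)} (h : p.1 < q.1) :
    sigmaToFin p < sigmaToFin q := by
  have hsub : insert p.1 (univ.filter (· < p.1)) ⊆ univ.filter (· < q.1) := by
    intro t ht
    simp only [mem_insert, mem_filter, mem_univ, true_and] at ht ⊢
    exact ht.elim (· ▸ h) (·.trans h)
  have hsum := sum_le_sum_of_subset (f := k) hsub
  rw [sum_insert (by simp)] at hsum
  show (∑ j ∈ univ.filter (· < p.1), k j) + p.2 < (∑ j ∈ univ.filter (· < q.1), k j) + q.2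
  have := p.2.isLt
  omega

lemma sigmaToFin_lt_sigmaToFin_of_snd_lt {i : Fin n} {x y : Fin (k i)} (h : x < y) :
    sigmaToFin ⟨i, x⟩ < sigmaToFin ⟨i, y⟩ := by
  rw [Fin.lt_def, sigmaToFin, sigmaToFin]
  exact Nat.add_lt_add_left h _

lemma strictMono_sigmaToFin_comp_finToSigma :
    StrictMono (sigmaToFin ∘ finToSigma (k := k)) := by
  have hsorted : ((List.ofFn fun i => List.ofFn fun x : Fin (k i) =>
      (⟨i, x⟩ : (i : Fin n) × Fin (k i))).flatten).Pairwise
        (fun p q => sigmaToFin p < sigmaToFin q) := by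
    simp only [List.pairwise_flatten, List.mem_ofFn, List.pairwise_ofFn, forall_exists_index,
      forall_apply_eq_imp_iff]
    exact ⟨fun i x y h => sigmaToFin_lt_sigmaToFin_of_snd_lt h,
      fun i j h x y => sigmaToFin_lt_sigmaToFin_of_fst_lt (p := ⟨i, x⟩) (q := ⟨j, y⟩) h⟩
  intro p q h
  exact List.pairwise_iff_getElem.mp hsorted _ _ _ _ h

lemma sigmaToFin_finToSigma (p : Fin (∑ i, k i)) : sigmaToFin (finToSigma p) = p :=
  strictMono_sigmaToFin_comp_finToSigma.apply_eq

lemma sigmaToFin_bijective : Function.Bijective (sigmaToFin (k := k)) :=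
  (Fintype.bijective_iff_surjective_and_card _).mpr
    ⟨fun p => ⟨_, sigmaToFin_finToSigma p⟩, by simp [Fintype.card_sigma]⟩

lemma finToSigma_sigmaToFin (q : (i : Fin n) × Fin (k i)) : finToSigma (sigmaToFin q) = q :=
  sigmaToFin_bijective.injective (sigmaToFin_finToSigma _)

end BlockDecomposition

lemma simComp_sigmaToFin {m n : ℕ} (θ : Fin m → Fin n) (k : Fin n → ℕ)
    (q : (i : Fin m) × Fin (k (θ i))) :
    simComp θ k (sigmaToFin q) = sigmaToFin ⟨θ q.1, q.2⟩ := by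
  rw [simComp, finToSigma_sigmaToFin]

lemma exists_inversion_of_ne_id {α : Type*} [LinearOrder α] [Finite α] {f : α → α}
    (hf : Function.Injective f) (hne : f ≠ id) : ∃ a b, a < b ∧ f b < f a := by
  by_contra! hmono
  exact hne (StrictMono.eq_id fun a b hab => (hmono a b hab).lt_of_ne (hf.ne hab.ne))

lemma eq_swap_of_inversion {h : Fin 2 → Fin 2} {a b : Fin 2} (hab : a < b) (hinv : h b < h a) :
    h = ⇑(Equiv.swap (0 : Fin 2) 1) := by
  revert h a b
  decide

lemma coprodMap_val {m₁ n₁ m₂ n₂ : ℕ} (f : Fin m₁ → Fin n₁) (g : Fin m₂ → Fin n₂)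
    (x : Fin (m₁ + m₂)) :
    (coprodMap f g x : ℕ) = if h : x < m₁ then (f ⟨x, h⟩ : ℕ)
      else n₁ + g ⟨x - m₁, by omega⟩ := by
  induction x using Fin.addCases with
  | left i => simp [coprodMap, i.isLt]
  | right i => simp [coprodMap]

namespace IsStructCat

variable {Δ : ∀ m n : ℕ, Set (Fin m → Fin n)}

lemma cast_mem {a b c d : ℕ} (hab : a = b) (hcd : c = d) {u : Fin a → Fin c} (hu : u ∈ Δ a c) :
    Fin.cast hcd ∘ u ∘ Fin.cast hab.symm ∈ Δ b d := by
  subst hab hcd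
  exact hu

variable (hΔ : IsStructCat Δ)
include hΔ

lemma swap_mem_of_inversion {m : ℕ} {f : Fin m → Fin m} (hf : Function.Bijective f)
    (hmem : f ∈ Δ m m) {a b : Fin m} (hab : a < b) (hinv : f b < f a) :
    ⇑(Equiv.swap (0 : Fin 2) 1) ∈ Δ 2 2 := by
  let k : Fin m → ℕ := fun i => if i ∈ ({f a, f b} : Finset (Fin m)) then 1 else 0
  have hk : ∑ i, k i = 2 := by
    simp only [k, sum_boole, filter_mem_eq_inter, univ_inter, Nat.cast_id]
    exact card_pair hinv.ne'
  have hkf : ∑ i, k (f i) = 2 := (hf.sum_comp k).trans hk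
  have hka : 0 < k (f a) := by simp [k]
  have hkb : 0 < k (f b) := by simp [k]
  refine eq_swap_of_inversion (a := Fin.cast hkf (sigmaToFin ⟨a, ⟨0, hka⟩⟩))
    (b := Fin.cast hkf (sigmaToFin ⟨b, ⟨0, hkb⟩⟩)) ?_ ?_ ▸ cast_mem hkf hk (hΔ.sim_mem f hmem k)
  · exact sigmaToFin_lt_sigmaToFin_of_fst_lt hab
  · simp only [Function.comp_apply, Fin.cast_cast, Fin.cast_eq_self, simComp_sigmaToFin]
    exact sigmaToFin_lt_sigmaToFin_of_fst_lt hinv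

variable (hsw : ⇑(Equiv.swap (0 : Fin 2) 1) ∈ Δ 2 2)
include hsw

lemma swap_castSucc_succ_mem {n : ℕ} (i : Fin n) :
    ⇑(Equiv.swap i.castSucc i.succ) ∈ Δ (n + 1) (n + 1) := by
  have hblock := hΔ.coprod_mem _ _ (hΔ.coprod_mem _ _ (hΔ.id_mem i) hsw) (hΔ.id_mem (n - 1 - i))
  have hsize : i + 2 + (n - 1 - i) = n + 1 := by omega
  convert cast_mem hsize hsize hblock using 1
  funext x
  have hsw_val : ∀ z : Fin 2, (Equiv.swap (0 : Fin 2) 1 z : ℕ) = 1 - z := by decide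
  rw [Fin.ext_iff, Equiv.swap_apply_def]
  simp only [Function.comp_apply, Fin.val_cast, coprodMap_val, id_eq, hsw_val]
  split_ifs <;> simp only [Fin.ext_iff, Fin.val_castSucc, Fin.val_succ] at * <;> omega

lemma perm_mem {n : ℕ} (σ : Equiv.Perm (Fin (n + 1))) : ⇑σ ∈ Δ (n + 1) (n + 1) := by
  let M : Submonoid (Equiv.Perm (Fin (n + 1))) :=
    { carrier := {σ | ⇑σ ∈ Δ (n + 1) (n + 1)}
      one_mem' := hΔ.id_mem _
      mul_mem' := fun {σ τ} hσ hτ => hΔ.comp_mem τ σ hτ hσ }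
  have hle : Submonoid.closure (Set.range fun i : Fin n => Equiv.swap i.castSucc i.succ) ≤ M :=
    Submonoid.closure_le.mpr (Set.range_subset_iff.mpr (swap_castSucc_succ_mem hΔ hsw))
  exact hle (Equiv.Perm.mclosure_swap_castSucc_succ n ▸ Submonoid.mem_top σ)

end IsStructCat

/-- If a structure category contains a non-identity bijection, then it contains all
bijections between finite ordinals. -/
theorem stmt_5 (Δ : ∀ m n : ℕ, Set (Fin m → Fin n)) (hΔ : IsStructCat Δ)
    (m : ℕ) (f : Fin m → Fin m) (hf : Function.Bijective f) (hne : f ≠ id)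
    (hmem : f ∈ Δ m m) :
    ∀ (n : ℕ) (g : Fin n → Fin n), Function.Bijective g → g ∈ Δ n n := by
  obtain ⟨a, b, hab, hinv⟩ := exists_inversion_of_ne_id hf.injective hne
  have hsw := hΔ.swap_mem_of_inversion hf hmem hab hinv
  intro n g hg
  cases n with
  | zero => exact Subsingleton.elim id g ▸ hΔ.id_mem 0
  | succ n => exact hΔ.perm_mem hsw (Equiv.ofBijective g hg)
end

section
/- Increasing (weakly monotone) functions between finite ordinals do not form a structure category: there exists a monotone function θ : [m] → [n] and k₁,…,kₙ ∈ ℕ such that the similarity component θ'_{k₁,…,kₙ} is not monotone. Concretely, for θ : [2] → [1] the constant map and k₁ = 2, the similarity component θ'₂ : [4] → [2] sends (1,2,3,4) to (1,2,1,2), which is not monotone. -/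
theorem monotone_bang (n : ℕ) : Monotone (bang n) :=
  fun _ _ _ => le_rfl

theorem simComp_bang_two_val (x : Fin (∑ i : Fin 2, (fun _ : Fin 1 => 2) (bang 2 i))) :
    (simComp (bang 2) (fun _ => 2) x).val = x.val % 2 := by
  revert x
  decide

theorem not_monotone_simComp_bang_two : ¬ Monotone (simComp (bang 2) (fun _ => 2)) := by
  intro h
  have h12 := h (a := ⟨1, by decide⟩) (b := ⟨2, by decide⟩) (by decide)
  rw [Fin.le_def, simComp_bang_two_val, simComp_bang_two_val] at h12
  exact absurd h12 (by decide)

/-- Monotone maps do not form a structure category: the similarity component `θ'₂` of the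
constant map `θ : [2] → [1]` with `k₁ = 2` sends `(1,2,3,4)` to `(1,2,1,2)` and is not
monotone. -/
theorem stmt_8 :
    ¬ IsStructCat (fun m n => {f : Fin m → Fin n | Monotone f}) ∧
    Monotone (bang 2) ∧
    ¬ Monotone (simComp (bang 2) (fun _ => 2)) ∧
    (∀ x : Fin (∑ i : Fin 2, (fun _ : Fin 1 => 2) (bang 2 i)),
      (simComp (bang 2) (fun _ => 2) x).val = x.val % 2) := by
  refine ⟨fun h => ?_, monotone_bang 2, not_monotone_simComp_bang_two, simComp_bang_two_val⟩
  exact not_monotone_simComp_bang_two (h.sim_mem (bang 2) (monotone_bang 2) fun _ => 2)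
end

section
/- If t is a σ-term with R-context v = v₁⋯vₙ and (s, w, (wᵢ)ᵢ) is an R-renaming of the variables of v (i.e., s assigns to each vᵢ a term of matching type, wᵢ is an R-context for s(vᵢ), and w is an R-context for w₁⋯wₙ), then w is an R-context for the substituted term s(t). -/
/-- A context structure on `V`: a relation between contexts (repetition-free words) and
words, reflexive on contexts, contained in letter-expression, closed under composition of
context assignments, and stable under substitution. -/
structure IsCtxStruct {V : Type} (R : List V → List V → Prop) : Prop where
  dom_nodup : ∀ {c v : List V}, R c v → c.Nodup
  refl : ∀ c : List V, c.Nodup → R c c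
  mem : ∀ {c v : List V}, R c v → ∀ x ∈ v, x ∈ c
  compose : ∀ {c : List V} (ps : List (List V × List V)),
    R c (ps.map Prod.fst).flatten → (∀ p ∈ ps, R p.1 p.2) →
    R c (ps.map Prod.snd).flatten
  subst : ∀ {c v d : List V} (s : V → List V),
    R c v → R d (c.map s).flatten → R d (v.map s).flatten

/-- A context structure is modelable if every context of a concatenation of words refines
into contexts of the individual words. -/
def Modelable {V : Type} (R : List V → List V → Prop) : Prop :=
  ∀ (c : List V) (vs : List (List V)), R c vs.flatten →
    ∃ cs : List (List V), R c cs.flatten ∧ List.Forall₂ R cs vs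

/-- The structure category `Δ_R` associated to a context structure `R` (relative to a fixed
injection `e : ℕ → V`): `θ : [m] → [n]` lies in `Δ_R` iff `(c₁⋯cₙ) R (c_{θ(1)}⋯c_{θ(m)})`. -/
def toCat {V : Type} (e : ℕ → V) (R : List V → List V → Prop) :
    ∀ m n : ℕ, Set (Fin m → Fin n) := fun m n =>
  {θ | R (List.ofFn fun i : Fin n => e i.1) (List.ofFn fun i : Fin m => e (θ i).1)}

/-- The context structure `R_Δ` associated to a structure category `Δ`: `c R_Δ v` iff `c`
is a context and `v = c_{θ(1)}⋯c_{θ(m)}` for some `θ` in `Δ`. -/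
def toCtx {V : Type} (Δ : ∀ m n : ℕ, Set (Fin m → Fin n)) :
    List V → List V → Prop := fun c v =>
  c.Nodup ∧ ∃ θ : Fin v.length → Fin c.length,
    θ ∈ Δ v.length c.length ∧ v = List.ofFn fun i => c.get (θ i)
/-- Terms of a multisorted signature with sorts `S`, function symbols `F` (with domain
`dom` and codomain `cod`), and variables `S × ℕ` (countably many of each sort). -/
inductive Tm (S : Type) (F : Type) (dom : F → List S) (cod : F → S) : S → Type
  | var (s : S) (k : ℕ) : Tm S F dom cod s
  | app (f : F) (args : (i : Fin (dom f).length) → Tm S F dom cod ((dom f).get i)) :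
      Tm S F dom cod (cod f)

/-- The left-to-right sequence `τ(t)` of variable occurrences in a term. -/
def varSeq {S F : Type} {dom : F → List S} {cod : F → S} :
    ∀ {s : S}, Tm S F dom cod s → List (S × ℕ)
  | _, .var s k => [(s, k)]
  | _, .app _ args => (List.ofFn fun i => varSeq (args i)).flatten

/-- Simultaneous (type-preserving) substitution of terms for variables. -/
def rename {S F : Type} {dom : F → List S} {cod : F → S}
    (σ : (x : S × ℕ) → Tm S F dom cod x.1) :
    ∀ {s : S}, Tm S F dom cod s → Tm S F dom cod s
  | _, .var s k => σ (s, k)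
  | _, .app f args => .app f fun i => rename σ (args i)

theorem varSeq_rename {S F : Type} {dom : F → List S} {cod : F → S}
    (σ : (x : S × ℕ) → Tm S F dom cod x.1) :
    ∀ {s : S} (t : Tm S F dom cod s),
      varSeq (rename σ t) = ((varSeq t).map fun x => varSeq (σ x)).flatten
  | _, .var s k => by simp [varSeq, rename]
  | _, .app f args => by
    simp only [varSeq, rename, varSeq_rename σ (args _), List.map_flatten,
      List.flatten_flatten, List.map_ofFn, Function.comp_def]

theorem IsCtxStruct.compose_forall₂ {V : Type} {R : List V → List V → Prop}
    (hR : IsCtxStruct R) {c : List V} {us vs : List (List V)}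
    (hc : R c us.flatten) (huv : List.Forall₂ R us vs) : R c vs.flatten := by
  have hlen := huv.length_eq
  have hfst : (us.zip vs).map Prod.fst = us := List.map_fst_zip (le_of_eq hlen)
  have hsnd : (us.zip vs).map Prod.snd = vs := List.map_snd_zip (ge_of_eq hlen)
  have h := hR.compose (us.zip vs) (by rwa [hfst]) fun _ hp => (List.forall₂_iff_zip.mp huv).2 hp
  rwa [hsnd] at h

/-- If `t` has `R`-context `v` and `(s, w, (wᵢ)ᵢ)` is an `R`-renaming of the variables of
`v`, then `w` is an `R`-context for the substituted term `s(t)`. -/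
theorem stmt_16 {S F : Type} (dom : F → List S) (cod : F → S)
    (R : List (S × ℕ) → List (S × ℕ) → Prop) (hR : IsCtxStruct R)
    {s : S} (t : Tm S F dom cod s) (v : List (S × ℕ)) (hv : R v (varSeq t))
    (σ : (x : S × ℕ) → Tm S F dom cod x.1)
    (w : List (S × ℕ)) (ws : List (List (S × ℕ)))
    (hws : List.Forall₂ (fun x wx => R wx (varSeq (σ x))) v ws)
    (hw : R w ws.flatten) :
    R w (varSeq (rename σ t)) := by
  rw [varSeq_rename]
  refine hR.subst _ hv (hR.compose_forall₂ hw ?_)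
  rw [List.forall₂_map_right_iff]
  exact hws.flip
end
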